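/- Let Φ be a skew-adjoint linear operator on a finite-dimensional real inner product space with ‖Φ‖ ≤ 1, and let γ₁ > 0, γ₂ ∈ ℝ. Then for every vector ξ, ⟨(γ₁·Id - γ₂·Φ)⁻¹ξ, ξ⟩ ≥ (γ₁/(γ₁² + γ₂²))·‖ξ‖². -/

import Mathlib

/-!
Put `x = B ξ`, so that `ξ = γ₁ x - γ₂ Φ x`. Skew-adjointness makes `Φ x ⟂ x`, hence
`⟨B ξ, ξ⟩ = γ₁ ‖x‖²` and, by Pythagoras and `‖Φ‖ ≤ 1`, `‖ξ‖² ≤ (γ₁² + γ₂²) ‖x‖²`.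
-/

open scoped RealInnerProductSpace

section

variable {V : Type*} [NormedAddCommGroup V] [InnerProductSpace ℝ V] {Φ : V →L[ℝ] V}

theorem inner_apply_self_eq_zero_of_skew (hΦ : ∀ x y : V, ⟪Φ x, y⟫ = -⟪x, Φ y⟫) (x : V) :
    ⟪x, Φ x⟫ = 0 := by
  have := hΦ x x
  rw [real_inner_comm] at this
  linarith

section Coercive

variable (hΦ : ∀ x : V, ⟪x, Φ x⟫ = 0) (a b : ℝ) (x : V)
include hΦ

theorem inner_smul_sub_smul_apply : ⟪x, a • x - b • Φ x⟫ = a * ‖x‖ ^ 2 := by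
  rw [inner_sub_right, real_inner_smul_right, real_inner_smul_right, hΦ,
    real_inner_self_eq_norm_sq, mul_zero, sub_zero]

theorem norm_smul_sub_smul_apply_sq :
    ‖a • x - b • Φ x‖ ^ 2 = a ^ 2 * ‖x‖ ^ 2 + b ^ 2 * ‖Φ x‖ ^ 2 := by
  have horth : ⟪a • x, b • Φ x⟫ = 0 := by
    rw [real_inner_smul_left, real_inner_smul_right, hΦ, mul_zero, mul_zero]
  simp only [sq, norm_sub_sq_eq_norm_sq_add_norm_sq_real horth, norm_smul, Real.norm_eq_abs]
  nlinarith [abs_mul_abs_self a, abs_mul_abs_self b]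

theorem norm_smul_sub_smul_apply_sq_le (hΦnorm : ‖Φ‖ ≤ 1) :
    ‖a • x - b • Φ x‖ ^ 2 ≤ (a ^ 2 + b ^ 2) * ‖x‖ ^ 2 := by
  have hΦx : ‖Φ x‖ ≤ ‖x‖ := by simpa using Φ.le_of_opNorm_le hΦnorm x
  rw [norm_smul_sub_smul_apply_sq hΦ]
  nlinarith [sq_nonneg b, pow_le_pow_left₀ (norm_nonneg (Φ x)) hΦx 2]

theorem div_mul_norm_smul_sub_smul_apply_sq_le_inner (hΦnorm : ‖Φ‖ ≤ 1) (ha : 0 ≤ a) :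
    a / (a ^ 2 + b ^ 2) * ‖a • x - b • Φ x‖ ^ 2 ≤ ⟪x, a • x - b • Φ x⟫ := by
  have hcancel : a / (a ^ 2 + b ^ 2) * (a ^ 2 + b ^ 2) = a :=
    div_mul_cancel_of_imp fun h => by nlinarith [sq_nonneg b]
  calc a / (a ^ 2 + b ^ 2) * ‖a • x - b • Φ x‖ ^ 2
      ≤ a / (a ^ 2 + b ^ 2) * ((a ^ 2 + b ^ 2) * ‖x‖ ^ 2) := by
        gcongr
        exact norm_smul_sub_smul_apply_sq_le hΦ a b x hΦnorm
    _ = ⟪x, a • x - b • Φ x⟫ := by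
        rw [← mul_assoc, hcancel, inner_smul_sub_smul_apply hΦ]

end Coercive

end

theorem skew_shift_inverse_coercive_general {V : Type*} [NormedAddCommGroup V]
    [InnerProductSpace ℝ V] (Φ : V →L[ℝ] V)
    (hΦ : ∀ x y : V, (inner ℝ (Φ x) y : ℝ) = -(inner ℝ x (Φ y) : ℝ))
    (hΦnorm : ‖Φ‖ ≤ 1) (γ₁ γ₂ : ℝ) (hγ₁ : 0 < γ₁) (B : V →L[ℝ] V)
    (hB₂ : (γ₁ • (ContinuousLinearMap.id ℝ V) - γ₂ • Φ) ∘L B = ContinuousLinearMap.id ℝ V) :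
    ∀ ξ : V, (γ₁ / (γ₁ ^ 2 + γ₂ ^ 2)) * ‖ξ‖ ^ 2 ≤ (inner ℝ (B ξ) ξ : ℝ) := by
  intro ξ
  have hξ : γ₁ • B ξ - γ₂ • Φ (B ξ) = ξ := by
    simpa using congrArg (· ξ) hB₂
  have key := div_mul_norm_smul_sub_smul_apply_sq_le_inner
    (inner_apply_self_eq_zero_of_skew hΦ) γ₁ γ₂ (B ξ) hΦnorm hγ₁.le
  rwa [hξ] at key

/-- For skew-adjoint Φ with ‖Φ‖ ≤ 1, γ₁ > 0, the inverse B of γ₁·Id - γ₂·Φ satisfies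
⟨Bξ, ξ⟩ ≥ (γ₁/(γ₁² + γ₂²))‖ξ‖². -/
theorem skew_shift_inverse_coercive {V : Type*} [NormedAddCommGroup V]
    [InnerProductSpace ℝ V] [FiniteDimensional ℝ V] (Φ : V →L[ℝ] V)
    (hΦ : ∀ x y : V, (inner ℝ (Φ x) y : ℝ) = -(inner ℝ x (Φ y) : ℝ))
    (hΦnorm : ‖Φ‖ ≤ 1) (γ₁ γ₂ : ℝ) (hγ₁ : 0 < γ₁) (B : V →L[ℝ] V)
    (hB₁ : B ∘L (γ₁ • (ContinuousLinearMap.id ℝ V) - γ₂ • Φ) = ContinuousLinearMap.id ℝ V)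
    (hB₂ : (γ₁ • (ContinuousLinearMap.id ℝ V) - γ₂ • Φ) ∘L B = ContinuousLinearMap.id ℝ V) :
    ∀ ξ : V, (γ₁ / (γ₁ ^ 2 + γ₂ ^ 2)) * ‖ξ‖ ^ 2 ≤ (inner ℝ (B ξ) ξ : ℝ) :=
  skew_shift_inverse_coercive_general Φ hΦ hΦnorm γ₁ γ₂ hγ₁ B hB₂
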